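/- Along the bifurcation curve of the steady Whitham equation, the second-order coefficient of the wave speed is μ₂(ξ) = 1/(m(ξ) − m(0)) + 1/(2(m(ξ) − m(2ξ))), where m(ξ) = √(tanh ξ/ξ). The function ξ ↦ μ₂(ξ) is strictly increasing on (0,∞) and has a unique positive zero ξ₀ (numerically ξ₀ ≈ 2.44); in particular μ₂ < 0 for 0 < ξ < ξ₀ and μ₂ > 0 for ξ > ξ₀. -/

import Mathlib

noncomputable def mW (ξ : ℝ) : ℝ := if ξ = 0 then 1 else Real.sqrt (Real.tanh ξ / ξ)

noncomputable def mu2 (ξ : ℝ) : ℝ :=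
  1/(mW ξ - mW 0) + 1/(2*(mW ξ - mW (2*ξ)))

/-!
Write `a = m(ξ)`, `b = m(2ξ)`, `t = tanh ξ`. The double-angle formula for `tanh` gives
`b² (1 + t²) = a²`, so `s = a / b` satisfies `s² = 1 + t²`, and
`m'(ξ) = a (1 - a² - t²) / (2t)`. In the variables `(a, s)` the derivative of `μ₂` becomes
`N(a, s) / (4 t s a (s - 1) (1 - a)²)` for an explicit polynomial `N`, and `N > 0` on the
region `0 < a < 1`, `1 < s < √2`, `2 - s² < a⁴` that `(m(ξ), m(ξ)/m(2ξ))` lies in (the last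
constraint is `sinh ξ > ξ`). So `μ₂` is strictly increasing; it changes sign on `(2.43, 2.45)`
by elementary bounds on `exp`, and the intermediate value theorem gives its unique zero.
-/

open Real Set

namespace Real

theorem tanh_pos {x : ℝ} (hx : 0 < x) : 0 < tanh x := by
  rw [tanh_eq_sinh_div_cosh]
  exact div_pos (sinh_pos_iff.2 hx) (cosh_pos x)

theorem hasDerivAt_tanh (x : ℝ) : HasDerivAt tanh (1 - tanh x ^ 2) x := by
  have h := (hasDerivAt_sinh x).div (hasDerivAt_cosh x) (cosh_pos x).ne'
  rw [show sinh / cosh = tanh from funext fun y => (tanh_eq_sinh_div_cosh y).symm] at h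
  refine h.congr_deriv ?_
  rw [tanh_eq_sinh_div_cosh]
  field_simp

theorem tanh_lt_self {x : ℝ} (hx : 0 < x) : tanh x < x := by
  have hmono : StrictMonoOn (fun y => y - tanh y) (Ici 0) := by
    refine strictMonoOn_of_hasDerivWithinAt_pos (convex_Ici 0)
      (fun y _ => ((hasDerivAt_id y).sub (hasDerivAt_tanh y)).continuousAt.continuousWithinAt)
      (fun y _ => ((hasDerivAt_id y).sub (hasDerivAt_tanh y)).hasDerivWithinAt) fun y hy => ?_
    rw [interior_Ici] at hy
    have := tanh_pos hy
    nlinarith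
  simpa using hmono self_mem_Ici hx.le hx

theorem tanh_two_mul (x : ℝ) : tanh (2 * x) = 2 * tanh x / (1 + tanh x ^ 2) := by
  have := cosh_pos x
  rw [tanh_eq_sinh_div_cosh, tanh_eq_sinh_div_cosh, sinh_two_mul, cosh_two_mul]
  field_simp

theorem one_sub_tanh_sq_lt_tanh_div_sq {x : ℝ} (hx : 0 < x) :
    1 - tanh x ^ 2 < (tanh x / x) ^ 2 := by
  have hsinh : x < sinh x := self_lt_sinh_iff.2 hx
  have := cosh_pos x
  rw [tanh_eq_sinh_div_cosh]
  field_simp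
  nlinarith [cosh_sq x]

theorem tanh_eq_one_sub_two_div (x : ℝ) : tanh x = 1 - 2 / (exp (2 * x) + 1) := by
  have := exp_pos x
  rw [tanh_eq_sinh_div_cosh, sinh_eq, cosh_eq, two_mul, exp_add, exp_neg]
  field_simp
  ring

theorem one_sub_two_div_le_tanh {x L : ℝ} (hL : 0 < L) (h : L ≤ exp (2 * x)) :
    1 - 2 / (L + 1) ≤ tanh x := by
  rw [tanh_eq_one_sub_two_div]
  gcongr

theorem tanh_le_one_sub_two_div {x U : ℝ} (h : exp (2 * x) ≤ U) :
    tanh x ≤ 1 - 2 / (U + 1) := by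
  rw [tanh_eq_one_sub_two_div]
  have := exp_pos (2 * x)
  gcongr

end Real

theorem mW_zero : mW 0 = 1 := if_pos rfl

theorem mW_of_ne_zero {x : ℝ} (hx : x ≠ 0) : mW x = √(tanh x / x) := if_neg hx

theorem mW_pos {x : ℝ} (hx : 0 < x) : 0 < mW x := by
  rw [mW_of_ne_zero hx.ne']
  exact sqrt_pos.2 (div_pos (tanh_pos hx) hx)

theorem mW_sq {x : ℝ} (hx : 0 < x) : mW x ^ 2 = tanh x / x := by
  rw [mW_of_ne_zero hx.ne', sq_sqrt (div_pos (tanh_pos hx) hx).le]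

theorem mW_lt_one {x : ℝ} (hx : 0 < x) : mW x < 1 := by
  rw [mW_of_ne_zero hx.ne', sqrt_lt' one_pos, one_pow, div_lt_one hx]
  exact tanh_lt_self hx

theorem lt_mW_of_sq_mul_lt_tanh {x α : ℝ} (hx : 0 < x) (hα : 0 ≤ α)
    (h : α ^ 2 * x < tanh x) : α < mW x := by
  rwa [mW_of_ne_zero hx.ne', lt_sqrt hα, lt_div_iff₀ hx]

theorem mW_lt_of_tanh_lt_sq_mul {x β : ℝ} (hx : 0 < x) (hβ : 0 < β) (h : tanh x < β ^ 2 * x) :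
    mW x < β := by
  rwa [mW_of_ne_zero hx.ne', sqrt_lt' hβ, div_lt_iff₀ hx]

theorem mW_two_mul_sq {x : ℝ} (hx : 0 < x) :
    mW (2 * x) ^ 2 * (1 + tanh x ^ 2) = mW x ^ 2 := by
  rw [mW_sq hx, mW_sq (by positivity), tanh_two_mul]
  field_simp

theorem mW_div_mW_two_mul_sq {x : ℝ} (hx : 0 < x) :
    (mW x / mW (2 * x)) ^ 2 = 1 + tanh x ^ 2 := by
  have hb := mW_pos (by positivity : 0 < 2 * x)
  rw [div_pow, ← mW_two_mul_sq hx]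
  field_simp

theorem mW_two_mul_lt {x : ℝ} (hx : 0 < x) : mW (2 * x) < mW x := by
  have hb := mW_pos (by positivity : 0 < 2 * x)
  have hsq : mW (2 * x) ^ 2 < mW x ^ 2 := by
    rw [← mW_two_mul_sq hx]
    nlinarith [pow_pos hb 2, pow_pos (tanh_pos hx) 2]
  exact lt_of_pow_lt_pow_left₀ 2 (mW_pos hx).le hsq

theorem hasDerivAt_mW {x : ℝ} (hx : 0 < x) :
    HasDerivAt mW (mW x * (1 - mW x ^ 2 - tanh x ^ 2) / (2 * tanh x)) x := by
  have hq : 0 < tanh x / x := div_pos (tanh_pos hx) hx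
  have h := ((hasDerivAt_tanh x).fun_div (hasDerivAt_id' x) hx.ne').sqrt hq.ne'
  have hloc : mW =ᶠ[nhds x] fun y => √(tanh y / y) := by
    filter_upwards [eventually_ne_nhds hx.ne'] with y hy using mW_of_ne_zero hy
  refine (h.congr_of_eventuallyEq hloc).congr_deriv ?_
  have ha := mW_pos hx
  have ht : tanh x = mW x ^ 2 * x := by rw [mW_sq hx]; field_simp
  rw [← mW_of_ne_zero hx.ne', ht]
  field_simp
  ring

def mu2DerivNum (a s : ℝ) : ℝ :=
  2 * a ^ 2 * s * (s - 1) * (a ^ 2 + s ^ 2 - 2)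
    + (1 - a) ^ 2 * (a ^ 2 * s ^ 2 - (2 - s ^ 2) * (s ^ 2 + 2 * s + 2))

theorem mu2DerivNum_pos {a s : ℝ} (ha0 : 0 < a) (ha1 : a < 1) (hs1 : 1 < s) (hs2 : s ^ 2 < 2)
    (has : 2 - s ^ 2 < a ^ 4) : 0 < mu2DerivNum a s := by
  have hs32 : s ≤ 3 / 2 := by nlinarith
  have hF : 0 ≤ 2 * a ^ 2 * s * (1 + a) ^ 2 * (1 + a ^ 2)
      + (s + 1) * (s ^ 2 - a ^ 2 * (s ^ 2 + 2 * s + 2)) := by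
    have hs := sub_nonneg.2 hs1.le
    have hbox := mul_nonneg hs (sub_nonneg.2 hs32)
    have ha := mul_nonneg ha0.le (sub_nonneg.2 ha1.le)
    nlinarith [mul_nonneg (mul_nonneg ha0.le ha0.le) hbox, mul_nonneg (mul_nonneg ha0.le ha0.le) hs,
      mul_nonneg (pow_nonneg ha0.le 3) hs, mul_nonneg ha hs, sq_nonneg (1 - 2 * a ^ 2),
      pow_nonneg ha0.le 3]
  have hK : 0 < 2 * a ^ 2 * s * (s ^ 2 - 1) + 2 * a ^ 4 * s * (1 - a ^ 2)
      + (1 - a) ^ 2 * (s ^ 2 + 2 * s + 2) * (s + 1) := by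
    have : 0 < s ^ 2 - 1 := by nlinarith
    have : 0 < 1 - a ^ 2 := by nlinarith
    have : 0 < s := by linarith
    have : 0 < 1 - a := by linarith
    positivity
  have key : (s + 1) * mu2DerivNum a s
      = (a ^ 4 + s ^ 2 - 2) * (2 * a ^ 2 * s * (s ^ 2 - 1) + 2 * a ^ 4 * s * (1 - a ^ 2)
          + (1 - a) ^ 2 * (s ^ 2 + 2 * s + 2) * (s + 1))
        + a ^ 2 * (1 - a) ^ 2 * (2 * a ^ 2 * s * (1 + a) ^ 2 * (1 + a ^ 2)
          + (s + 1) * (s ^ 2 - a ^ 2 * (s ^ 2 + 2 * s + 2))) := by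
    unfold mu2DerivNum
    ring
  have hprod : 0 < (s + 1) * mu2DerivNum a s := by
    have : 0 < a ^ 4 + s ^ 2 - 2 := by linarith
    rw [key]
    positivity
  exact pos_of_mul_pos_right hprod (by linarith)

noncomputable def mu2Deriv (ξ : ℝ) : ℝ :=
  mu2DerivNum (mW ξ) (mW ξ / mW (2 * ξ)) /
    (4 * tanh ξ * (mW ξ / mW (2 * ξ)) * mW ξ * (mW ξ / mW (2 * ξ) - 1) * (1 - mW ξ) ^ 2)

theorem mu2_eq_inv_add_inv :
    mu2 = fun x => (mW x - 1)⁻¹ + (2 * (mW x - mW (2 * x)))⁻¹ := by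
  funext x
  simp only [mu2, mW_zero, one_div]

theorem hasDerivAt_mu2 {ξ : ℝ} (hξ : 0 < ξ) : HasDerivAt mu2 (mu2Deriv ξ) ξ := by
  have h2ξ : 0 < 2 * ξ := by positivity
  have ha1 := mW_lt_one hξ
  have hba := mW_two_mul_lt hξ
  have hA := hasDerivAt_mW hξ
  have hB : HasDerivAt (fun x => mW (2 * x)) _ ξ :=
    (hasDerivAt_mW h2ξ).comp ξ ((hasDerivAt_id ξ).const_mul 2)
  rw [mu2_eq_inv_add_inv]
  refine (((hA.sub_const 1).inv (by linarith)).add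
    (((hA.sub hB).const_mul 2).inv (by simp only [Pi.sub_apply]; linarith))).congr_deriv ?_
  clear hA hB
  simp only [Pi.sub_apply, mu2Deriv]
  have hs2 := mW_div_mW_two_mul_sq hξ
  have ha := mW_pos hξ
  have hb := mW_pos h2ξ
  have ht := tanh_pos hξ
  rw [tanh_two_mul]
  generalize mW ξ = a at *
  generalize mW (2 * ξ) = b at *
  generalize tanh ξ = t at *
  have hs1 : 1 < a / b := (one_lt_div hb).2 hba
  generalize hs : a / b = s at *
  obtain rfl : b = a / s := by rw [← hs]; field_simp
  have h0 : 1 - a ≠ 0 := by linarith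
  have h1 : a - 1 ≠ 0 := by linarith
  have h3 : s - 1 ≠ 0 := by linarith
  rw [← hs2]
  unfold mu2DerivNum
  field_simp
  rw [show t ^ 2 = s ^ 2 - 1 by linarith]
  ring

theorem mu2Deriv_pos {ξ : ℝ} (hξ : 0 < ξ) : 0 < mu2Deriv ξ := by
  have hs2 := mW_div_mW_two_mul_sq hξ
  have ha := mW_pos hξ
  have ha1 := mW_lt_one hξ
  have hs1 : 1 < mW ξ / mW (2 * ξ) :=
    (one_lt_div (mW_pos (by positivity))).2 (mW_two_mul_lt hξ)
  have ht := tanh_pos hξ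
  have ht1 := tanh_sq_lt_one ξ
  have has := one_sub_tanh_sq_lt_tanh_div_sq hξ
  rw [← mW_sq hξ] at has
  rw [mu2Deriv]
  generalize mW ξ / mW (2 * ξ) = s at *
  generalize mW ξ = a at *
  have : 0 < s - 1 := by linarith
  have : 0 < 1 - a := by linarith
  exact div_pos (mu2DerivNum_pos ha ha1 hs1 (by linarith) (by nlinarith)) (by positivity)

theorem mu2_strictMonoOn : StrictMonoOn mu2 (Ioi 0) := by
  refine strictMonoOn_of_hasDerivWithinAt_pos (f' := mu2Deriv) (convex_Ioi 0)
    (fun x hx => (hasDerivAt_mu2 hx).continuousAt.continuousWithinAt) (fun x hx => ?_)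
    (fun x hx => ?_) <;> rw [interior_Ioi] at *
  · exact (hasDerivAt_mu2 hx).hasDerivWithinAt
  · exact mu2Deriv_pos hx

theorem mu2_eq_div {x : ℝ} (hx : 0 < x) :
    mu2 x = (1 + 2 * mW (2 * x) - 3 * mW x) / (2 * (1 - mW x) * (mW x - mW (2 * x))) := by
  have h0 : 1 - mW x ≠ 0 := (sub_pos.2 (mW_lt_one hx)).ne'
  have h1 : mW x - 1 ≠ 0 := (sub_neg.2 (mW_lt_one hx)).ne
  have h2 : mW x - mW (2 * x) ≠ 0 := (sub_pos.2 (mW_two_mul_lt hx)).ne'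
  rw [mu2, mW_zero]
  field_simp
  ring

theorem mu2_neg_of_lt {x : ℝ} (hx : 0 < x) (h : 1 + 2 * mW (2 * x) < 3 * mW x) : mu2 x < 0 := by
  have h1 := sub_pos.2 (mW_lt_one hx)
  have h2 := sub_pos.2 (mW_two_mul_lt hx)
  rw [mu2_eq_div hx]
  exact div_neg_of_neg_of_pos (by linarith) (by positivity)

theorem mu2_pos_of_lt {x : ℝ} (hx : 0 < x) (h : 3 * mW x < 1 + 2 * mW (2 * x)) : 0 < mu2 x := by
  have h1 := sub_pos.2 (mW_lt_one hx)
  have h2 := sub_pos.2 (mW_two_mul_lt hx)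
  rw [mu2_eq_div hx]
  exact div_pos (by linarith) (by positivity)

theorem tanh_2_43_ge : 60 / 61 ≤ tanh 2.43 := by
  have h4 : 2.7182818283 ^ 4 < exp 4 := by
    rw [show exp 4 = exp 1 ^ 4 by rw [exp_one_pow, Nat.cast_ofNat]]
    gcongr
    exact exp_one_gt_d9
  have h086 := quadratic_le_exp_of_nonneg (by norm_num : (0 : ℝ) ≤ 0.86)
  have hexp : 121 ≤ exp (2 * 2.43) := by
    rw [show (2 : ℝ) * 2.43 = 4 + 0.86 by norm_num, exp_add]
    nlinarith [exp_pos 4]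
  convert one_sub_two_div_le_tanh (by norm_num) hexp using 1
  norm_num

theorem tanh_2_45_le : tanh 2.45 ≤ 67 / 68 := by
  have h5 : exp 5 < 2.7182818286 ^ 5 := by
    rw [show exp 5 = exp 1 ^ 5 by rw [exp_one_pow, Nat.cast_ofNat]]
    gcongr
    exact exp_one_lt_d9
  have h01 := add_one_le_exp (0.1 : ℝ)
  have hexp : exp (2 * 2.45) ≤ 135 := by
    have : exp (2 * 2.45) * exp 0.1 = exp 5 := by rw [← exp_add]; norm_num
    nlinarith [exp_pos (2 * 2.45)]
  convert tanh_le_one_sub_two_div hexp using 1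
  norm_num

theorem tanh_4_9_ge : 7999 / 8001 ≤ tanh 4.9 := by
  have h9 : 2.7182818283 ^ 9 < exp 9 := by
    rw [show exp 9 = exp 1 ^ 9 by rw [exp_one_pow, Nat.cast_ofNat]]
    gcongr
    exact exp_one_gt_d9
  have hexp : 8000 ≤ exp (2 * 4.9) := by
    have := exp_le_exp.2 (by norm_num : (9 : ℝ) ≤ 2 * 4.9)
    nlinarith
  convert one_sub_two_div_le_tanh (by norm_num) hexp using 1
  norm_num

theorem mu2_2_43_neg : mu2 2.43 < 0 := by
  have ha : 0.6362 < mW 2.43 :=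
    lt_mW_of_sq_mul_lt_tanh (by norm_num) (by norm_num) (lt_of_lt_of_le (by norm_num) tanh_2_43_ge)
  have hb : mW (2 * 2.43) < 0.4537 :=
    mW_lt_of_tanh_lt_sq_mul (by norm_num) (by norm_num) ((tanh_lt_one _).trans_le (by norm_num))
  exact mu2_neg_of_lt (by norm_num) (by linarith)

theorem mu2_2_45_pos : 0 < mu2 2.45 := by
  have ha : mW 2.45 < 0.6342 :=
    mW_lt_of_tanh_lt_sq_mul (by norm_num) (by norm_num)
      (lt_of_le_of_lt tanh_2_45_le (by norm_num))
  have hb : 0.4516 < mW (2 * 2.45) := by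
    rw [show (2 : ℝ) * 2.45 = 4.9 by norm_num]
    exact lt_mW_of_sq_mul_lt_tanh (by norm_num) (by norm_num)
      (lt_of_lt_of_le (by norm_num) tanh_4_9_ge)
  exact mu2_pos_of_lt (by norm_num) (by linarith)

theorem whitham_mu2 :
    StrictMonoOn mu2 (Set.Ioi 0) ∧
    ∃ ξ₀ : ℝ, 0 < ξ₀ ∧ mu2 ξ₀ = 0 ∧ (∀ ξ > (0:ℝ), mu2 ξ = 0 → ξ = ξ₀) ∧
      ξ₀ ∈ Set.Ioo (2.43:ℝ) 2.45 ∧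
      (∀ ξ, 0 < ξ → ξ < ξ₀ → mu2 ξ < 0) ∧
      (∀ ξ, ξ₀ < ξ → 0 < mu2 ξ) := by
  have hmono := mu2_strictMonoOn
  have hcont : ContinuousOn mu2 (Icc 2.43 2.45) := fun x hx =>
    (hasDerivAt_mu2 (by linarith [hx.1])).continuousAt.continuousWithinAt
  obtain ⟨ξ₀, hξ₀, hzero⟩ :=
    intermediate_value_Ioo (by norm_num) hcont ⟨mu2_2_43_neg, mu2_2_45_pos⟩
  have hpos : 0 < ξ₀ := by linarith [hξ₀.1]
  refine ⟨hmono, ξ₀, hpos, hzero, fun ξ hξ h => hmono.injOn hξ hpos (h.trans hzero.symm), hξ₀,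
    fun ξ hξ hlt => ?_, fun ξ hlt => ?_⟩
  · simpa [hzero] using hmono hξ hpos hlt
  · simpa [hzero] using hmono hpos (hpos.trans hlt) hlt
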